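/- arXiv:1210.5725 — 8 statements merged into one kernel-verified Lean document; each statement's English description precedes it below -/
import Mathlib

section
/- Let W be a weighing matrix of order n ≥ 1 and weight w ≥ 1. Then every nonzero point of the lattice Λ(W) has Manhattan weight at least w, and Λ(W) contains a point of Manhattan weight exactly w; that is, the minimum Manhattan distance of Λ(W) equals w. -/
/-- A weighing matrix of order `n` and weight `w`: an `n × n` integer matrix with
entries in `{0, 1, -1}` such that every row and every column has exactly `w`
nonzero entries, and `W * Wᵀ = w • 1`. -/
def IsWeighing (n w : ℕ) (W : Matrix (Fin n) (Fin n) ℤ) : Prop :=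
  (∀ i j, W i j = 0 ∨ W i j = 1 ∨ W i j = -1) ∧
  (∀ i : Fin n, (Finset.univ.filter (fun j => W i j ≠ 0)).card = w) ∧
  (∀ j : Fin n, (Finset.univ.filter (fun i => W i j ≠ 0)).card = w) ∧
  W * W.transpose = (w : ℤ) • (1 : Matrix (Fin n) (Fin n) ℤ)

/-- The lattice generated by the rows of `G`: all integer linear combinations of rows. -/
def latticeOf {n : ℕ} (G : Matrix (Fin n) (Fin n) ℤ) : Set (Fin n → ℤ) :=
  { x | ∃ u : Fin n → ℤ, x = Matrix.vecMul u G }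

/-- The minimum Manhattan distance of the lattice generated by a weighing matrix of
order `n ≥ 1` and weight `w ≥ 1` is exactly `w`. -/
theorem min_manhattan_distance_of_weighing_lattice
    (n w : ℕ) (hn : 1 ≤ n) (hw : 1 ≤ w)
    (W : Matrix (Fin n) (Fin n) ℤ) (hW : IsWeighing n w W) :
    (∀ x ∈ latticeOf W, x ≠ 0 → (w : ℤ) ≤ ∑ i, |x i|) ∧
    (∃ x ∈ latticeOf W, (∑ i, |x i|) = (w : ℤ)) := by
  obtain ⟨hent, hrow, hcol, horth⟩ := hW
  have habs : ∀ i j, |W i j| ≤ 1 := by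
    intro i j
    rcases hent i j with h | h | h <;> simp [h]
  constructor
  · rintro x ⟨u, rfl⟩ hx
    have hu : u ≠ 0 := by
      rintro rfl
      exact hx (by simp [Matrix.vecMul])
    obtain ⟨i, hi⟩ := Function.ne_iff.mp hu
    have key : Matrix.vecMul (Matrix.vecMul u W) W.transpose = (w : ℤ) • u := by
      rw [Matrix.vecMul_vecMul, horth]
      funext k
      simp [Matrix.vecMul, dotProduct, Matrix.one_apply, Finset.sum_ite_eq']
      ring
    have h1 : (w : ℤ) * u i = ∑ j, W i j * (Matrix.vecMul u W) j := by
      have := congrFun key i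
      simp only [Matrix.vecMul, dotProduct, Matrix.transpose_apply, Pi.smul_apply,
        smul_eq_mul] at this
      rw [← this]
      apply Finset.sum_congr rfl
      intro j _
      simp [Matrix.vecMul, dotProduct]
      ring
    have h2 : (w : ℤ) ≤ |(w : ℤ) * u i| := by
      rw [abs_mul]
      have : (1 : ℤ) ≤ |u i| := Int.one_le_abs (by simpa using hi)
      calc (w : ℤ) = |(w : ℤ)| * 1 := by simp
        _ ≤ |(w : ℤ)| * |u i| := by
            exact mul_le_mul_of_nonneg_left this (abs_nonneg _)
    calc (w : ℤ) ≤ |(w : ℤ) * u i| := h2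
      _ = |∑ j, W i j * (Matrix.vecMul u W) j| := by rw [h1]
      _ ≤ ∑ j, |W i j * (Matrix.vecMul u W) j| := Finset.abs_sum_le_sum_abs _ _
      _ ≤ ∑ j, |(Matrix.vecMul u W) j| := by
          apply Finset.sum_le_sum
          intro j _
          rw [abs_mul]
          calc |W i j| * |(Matrix.vecMul u W) j|
              ≤ 1 * |(Matrix.vecMul u W) j| :=
                mul_le_mul_of_nonneg_right (habs i j) (abs_nonneg _)
            _ = _ := one_mul _
  · have i0 : Fin n := ⟨0, hn⟩
    refine ⟨W i0, ⟨Pi.single i0 1, ?_⟩, ?_⟩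
    · funext j
      simp [Matrix.vecMul, dotProduct, Pi.single_apply]
    · have : ∀ j, |W i0 j| = if W i0 j ≠ 0 then 1 else 0 := by
        intro j
        rcases hent i0 j with h | h | h <;> simp [h]
      calc ∑ j, |W i0 j| = ∑ j, if W i0 j ≠ 0 then (1:ℤ) else 0 := by
            simp_rw [this]
        _ = ((Finset.univ.filter (fun j => W i0 j ≠ 0)).card : ℤ) := by
            rw [Finset.sum_ite, Finset.sum_const, Finset.sum_const]; simp
        _ = w := by rw [hrow i0]
end

section
/- Let W be a weighing matrix of order n ≥ 1 and weight w ≥ 1. Then a vector x ∈ ℤⁿ belongs to Λ(W) if and only if for every row r of W the standard inner product ⟨x, r⟩ = Σᵢ xᵢ rᵢ is divisible by w. (Equivalently, the code over ℤ_w obtained by reducing Λ(W) modulo w is a self-dual code.) -/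
lemma transpose_mul_self_of_weighing (n w : ℕ) (hw : 1 ≤ w)
    (W : Matrix (Fin n) (Fin n) ℤ)
    (h : W * W.transpose = (w : ℤ) • (1 : Matrix (Fin n) (Fin n) ℤ)) :
    W.transpose * W = (w : ℤ) • (1 : Matrix (Fin n) (Fin n) ℤ) := by
  have hw0 : (w : ℚ) ≠ 0 := by positivity
  let f := Int.castRingHom ℚ
  have hQ : W.map f * (W.transpose).map f = (w : ℚ) • (1 : Matrix (Fin n) (Fin n) ℚ) := by
    rw [← Matrix.map_mul, h]
    ext i j
    simp only [Matrix.map_apply, Matrix.smul_apply, Matrix.one_apply, smul_eq_mul,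
      mul_ite, mul_one, mul_zero]
    split <;> simp
  have h1 : W.map f * ((w : ℚ)⁻¹ • (W.transpose).map f) = 1 := by
    rw [Matrix.mul_smul, hQ, smul_smul, inv_mul_cancel₀ hw0, one_smul]
  have h2 : ((w : ℚ)⁻¹ • (W.transpose).map f) * W.map f = 1 :=
    mul_eq_one_comm.mp h1
  have h3 : (W.transpose).map f * W.map f = (w : ℚ) • (1 : Matrix (Fin n) (Fin n) ℚ) := by
    have := congrArg (fun M => (w : ℚ) • M) h2
    simpa [Matrix.smul_mul, smul_smul, mul_inv_cancel₀ hw0] using this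
  ext i j
  have := congrFun (congrFun h3 i) j
  rw [← Matrix.map_mul] at this
  have h4 : (((W.transpose * W) i j : ℤ) : ℚ) = (((((w : ℤ) • (1 : Matrix (Fin n) (Fin n) ℤ)) i j) : ℤ) : ℚ) := by
    simpa [Matrix.map_apply, Matrix.smul_apply, Matrix.one_apply, apply_ite ((↑) : ℤ → ℚ)] using this
  exact_mod_cast h4

/-- For a weighing matrix `W` of order `n ≥ 1` and weight `w ≥ 1`, a vector
`x ∈ ℤⁿ` lies in `Λ(W)` iff its inner product with every row of `W` is
divisible by `w` (self-duality of the reduced code over `ℤ_w`). -/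
theorem mem_weighing_lattice_iff_inner_products_divisible
    (n w : ℕ) (hn : 1 ≤ n) (hw : 1 ≤ w)
    (W : Matrix (Fin n) (Fin n) ℤ) (hW : IsWeighing n w W) (x : Fin n → ℤ) :
    x ∈ latticeOf W ↔ ∀ r : Fin n, (w : ℤ) ∣ ∑ i, x i * W r i := by
  obtain ⟨-, -, -, hWW⟩ := hW
  have hTW := transpose_mul_self_of_weighing n w hw W hWW
  constructor
  · rintro ⟨u, rfl⟩ r
    refine ⟨u r, ?_⟩
    calc ∑ i, Matrix.vecMul u W i * W r i
        = ∑ i, (∑ j, u j * W j i) * W r i := by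
          simp [Matrix.vecMul, dotProduct]
      _ = ∑ j, u j * ∑ i, W j i * W r i := by
          simp only [Finset.sum_mul, Finset.mul_sum, mul_assoc]
          exact Finset.sum_comm
      _ = ∑ j, u j * (W * W.transpose) j r := by
          simp [Matrix.mul_apply, Matrix.transpose_apply]
      _ = (w : ℤ) * u r := by
          rw [hWW]
          simp [Matrix.smul_apply, Matrix.one_apply, Finset.sum_ite_eq', mul_comm]
  · intro h
    choose c hc using h
    refine ⟨c, funext fun i => ?_⟩
    have hw0 : (w : ℤ) ≠ 0 := by positivity
    apply mul_left_cancel₀ hw0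
    calc (w : ℤ) * x i
        = ∑ j, x j * ((w : ℤ) * if j = i then 1 else 0) := by
          simp [Finset.sum_ite_eq', mul_comm]
      _ = ∑ j, x j * (W.transpose * W) j i := by
          rw [hTW]; simp [Matrix.smul_apply, Matrix.one_apply]
      _ = ∑ j, x j * ∑ r, W r j * W r i := by
          simp [Matrix.mul_apply, Matrix.transpose_apply]
      _ = ∑ r, (∑ j, x j * W r j) * W r i := by
          simp only [Finset.sum_mul, Finset.mul_sum, mul_assoc]
          exact Finset.sum_comm
      _ = ∑ r, (w : ℤ) * (c r * W r i) := by
          refine Finset.sum_congr rfl fun r _ => ?_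
          rw [hc r, mul_assoc]
      _ = (w : ℤ) * Matrix.vecMul c W i := by
          rw [← Finset.mul_sum]
          simp [Matrix.vecMul, dotProduct]
end

section
/- Let p be a prime and let C be a conference matrix of order p + 1. Then the rank of the matrix obtained by reducing C modulo p, viewed as a matrix over the field ℤ/pℤ, equals (p+1)/2. -/
open Matrix Module

theorem Module.Basis.sumExtend_apply_inl {K V ι : Type*} [Field K] [AddCommGroup V]
    [Module K V] {v : ι → V} (hv : LinearIndependent K v) (i : ι) :
    Basis.sumExtend hv (Sum.inl i) = v i := by
  simp only [Basis.sumExtend, Basis.reindex_apply, Basis.coe_extend]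
  rfl

theorem Matrix.exists_isUnit_det_mul_cols_eq_zero {K n : Type*} [Field K] [Fintype n]
    [DecidableEq n] (A : Matrix n n K) :
    ∃ U : Matrix n n K, IsUnit U.det ∧ ∃ s : Finset n, s.card = Fintype.card n - A.rank ∧
      ∀ i, ∀ j ∈ s, (A * U) i j = 0 := by
  set V := LinearMap.ker A.mulVecLin
  have hV : finrank K V = Fintype.card n - A.rank := by
    have : A.rank + finrank K V = Fintype.card n := by
      simpa [Matrix.rank] using LinearMap.finrank_range_add_finrank_ker A.mulVecLin
    omega
  -- The columns of `U` form a basis of `Kⁿ` extending a basis of `ker A`.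
  have hv := (finBasis K V).linearIndependent.map' V.subtype V.ker_subtype
  let e := (Basis.sumExtend hv).indexEquiv (Pi.basisFun K n)
  let b := (Basis.sumExtend hv).reindex e
  refine ⟨(Pi.basisFun K n).toMatrix b, ?_,
    Finset.univ.map (Function.Embedding.inl.trans e.toEmbedding), by simp [hV], ?_⟩
  · have := (Pi.basisFun K n).invertibleToMatrix b
    exact isUnit_det_of_invertible _
  · intro i j hj
    obtain ⟨t, -, rfl⟩ := Finset.mem_map.mp hj
    have hker : A *ᵥ b (e (Sum.inl t)) = 0 := by
      simp only [b, Basis.reindex_apply, Equiv.symm_apply_apply, Basis.sumExtend_apply_inl]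
      exact (finBasis K V t).2
    calc (A * (Pi.basisFun K n).toMatrix b) i (e (Sum.inl t))
      _ = (A *ᵥ b (e (Sum.inl t))) i := by
        simp [mul_apply, mulVec, dotProduct, Basis.toMatrix_apply]
      _ = 0 := by rw [hker]; rfl

theorem Matrix.pow_card_dvd_det_of_dvd_cols {R n : Type*} [CommRing R] [Fintype n]
    [DecidableEq n] (N : Matrix n n R) (a : R) (s : Finset n)
    (h : ∀ i, ∀ j ∈ s, a ∣ N i j) :
    a ^ s.card ∣ N.det := by
  choose! E hE using h
  have hN : N = (of fun i j => if j ∈ s then E i j else N i j) *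
      diagonal fun j => if j ∈ s then a else 1 := by
    ext i j
    by_cases hj : j ∈ s <;> simp [hj, hE i j, mul_comm]
  rw [hN, det_mul, det_diagonal, Finset.prod_ite_mem, Finset.univ_inter, Finset.prod_const]
  exact dvd_mul_left _ _

theorem Matrix.pow_sub_rank_map_dvd_det {n : Type*} [Fintype n] [DecidableEq n] (p : ℕ)
    [Fact p.Prime] (M : Matrix n n ℤ) :
    (p : ℤ) ^ (Fintype.card n - (M.map (Int.cast : ℤ → ZMod p)).rank) ∣ M.det := by
  obtain ⟨U, hU, s, hs, hAU⟩ :=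
    (M.map (Int.cast : ℤ → ZMod p)).exists_isUnit_det_mul_cols_eq_zero
  set U' : Matrix n n ℤ := U.map fun x => (x.cast : ℤ)
  have hU' : U'.map (Int.cast : ℤ → ZMod p) = U := by
    ext
    simp [U']
  have hMU' : (M * U').map (Int.cast : ℤ → ZMod p) = M.map Int.cast * U := by
    rw [← hU']
    exact Matrix.map_mul (f := Int.castRingHom (ZMod p))
  have hcols : ∀ i, ∀ j ∈ s, (p : ℤ) ∣ (M * U') i j := fun i j hj => by
    rw [← ZMod.intCast_zmod_eq_zero_iff_dvd, ← hAU i j hj, ← hMU']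
    rfl
  have hU'det : ¬ (p : ℤ) ∣ U'.det := by
    rw [← ZMod.intCast_zmod_eq_zero_iff_dvd, ← eq_intCast (Int.castRingHom (ZMod p)),
      RingHom.map_det, RingHom.mapMatrix_apply]
    exact hU'.symm ▸ hU.ne_zero
  have hdvd := (M * U').pow_card_dvd_det_of_dvd_cols _ s hcols
  rw [det_mul, hs] at hdvd
  exact (Nat.prime_iff_prime_int.mp Fact.out).pow_dvd_of_dvd_mul_right _ hU'det hdvd

theorem Matrix.two_mul_rank_map_eq_card_of_mul_transpose_eq_smul {n : Type*} [Fintype n]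
    [DecidableEq n] (p : ℕ) [Fact p.Prime] (M : Matrix n n ℤ)
    (hM : M * Mᵀ = (p : ℤ) • 1) :
    2 * (M.map (Int.cast : ℤ → ZMod p)).rank = Fintype.card n := by
  set A := M.map (Int.cast : ℤ → ZMod p)
  set m := Fintype.card n
  have hAAt : A * Aᵀ = 0 := by
    calc A * Aᵀ = (M * Mᵀ).map Int.cast := by
          rw [← transpose_map]
          exact (Matrix.map_mul (f := Int.castRingHom (ZMod p))).symm
      _ = 0 := by
          rw [hM]
          ext
          simp only [map_apply, smul_apply, smul_eq_mul, Int.cast_mul, Int.cast_natCast,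
            ZMod.natCast_self, zero_mul, zero_apply]
  have hupper : A.rank + A.rank ≤ m := by
    simpa [rank_transpose] using rank_add_rank_le_card_of_mul_eq_zero hAAt
  have hdet : M.det * M.det = (p : ℤ) ^ m := by
    have := congrArg det hM
    rwa [det_mul, det_transpose, det_smul, det_one, mul_one] at this
  have hdvd : (p : ℤ) ^ ((m - A.rank) + (m - A.rank)) ∣ (p : ℤ) ^ m := by
    rw [← hdet, pow_add]
    exact mul_dvd_mul (M.pow_sub_rank_map_dvd_det p) (M.pow_sub_rank_map_dvd_det p)
  have hlower : (m - A.rank) + (m - A.rank) ≤ m :=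
    (Nat.pow_dvd_pow_iff_le_right (Fact.out : p.Prime).one_lt).mp (by exact_mod_cast hdvd)
  omega

/-- A conference matrix of order `p + 1` (a weighing matrix of weight `p`),
`p` prime, reduced modulo `p`, has rank `(p+1)/2` over the field `ℤ/pℤ`. -/
theorem rank_conference_matrix_mod_p
    (p : ℕ) (hp : p.Prime) (C : Matrix (Fin (p + 1)) (Fin (p + 1)) ℤ)
    (hC : IsWeighing (p + 1) p C) :
    (C.map (Int.cast : ℤ → ZMod p)).rank = (p + 1) / 2 := by
  have := Fact.mk hp
  have h := C.two_mul_rank_map_eq_card_of_mul_transpose_eq_smul p hC.2.2.2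
  rw [Fintype.card_fin] at h
  omega
end

section
/- For every m ≥ 0, the lattice generated by the rows of G(m, m) equals the lattice generated by the rows of the Sylvester Hadamard matrix 𝓗ₘ; that is, Λ(m, m) = Λ(𝓗ₘ). -/
/-- `Hmat m` : the `2^m × 2^m` matrix defined by `H₀ = [1]` and
`H_{m+1} = [[Hₘ, Hₘ], [0, Hₘ]]` in block form. -/
def Hmat : (m : ℕ) → Matrix (Fin (2 ^ m)) (Fin (2 ^ m)) ℤ
  | 0 => Matrix.of fun _ _ => 1
  | m + 1 =>
      Matrix.reindex
        (finSumFinEquiv.trans (finCongr (by rw [pow_succ, mul_two] :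
          2 ^ m + 2 ^ m = 2 ^ (m + 1))))
        (finSumFinEquiv.trans (finCongr (by rw [pow_succ, mul_two] :
          2 ^ m + 2 ^ m = 2 ^ (m + 1))))
        (Matrix.fromBlocks (Hmat m) (Hmat m) 0 (Hmat m))

/-- `Smat m` : the `2^m × 2^m` Sylvester Hadamard matrix, `𝓗₀ = [1]`,
`𝓗_{m+1} = [[𝓗ₘ, 𝓗ₘ], [𝓗ₘ, −𝓗ₘ]]`. -/
def Smat : (m : ℕ) → Matrix (Fin (2 ^ m)) (Fin (2 ^ m)) ℤ
  | 0 => Matrix.of fun _ _ => 1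
  | m + 1 =>
      Matrix.reindex
        (finSumFinEquiv.trans (finCongr (by rw [pow_succ, mul_two] :
          2 ^ m + 2 ^ m = 2 ^ (m + 1))))
        (finSumFinEquiv.trans (finCongr (by rw [pow_succ, mul_two] :
          2 ^ m + 2 ^ m = 2 ^ (m + 1))))
        (Matrix.fromBlocks (Smat m) (Smat m) (Smat m) (-(Smat m)))

/-- Hamming weight of the `s`-th row of `Hmat m`. -/
def rowWeight (m : ℕ) (s : Fin (2 ^ m)) : ℕ :=
  (Finset.univ.filter (fun t => Hmat m s t ≠ 0)).card

/-- `Gmat m j` : the matrix whose `s`-th row is the `s`-th row of `Hmat m`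
multiplied by `2^(j − ℓ)` (truncated subtraction) where `2^ℓ` is the Hamming
weight of that row. -/
def Gmat (m j : ℕ) : Matrix (Fin (2 ^ m)) (Fin (2 ^ m)) ℤ :=
  Matrix.of fun s t => (2 : ℤ) ^ (j - Nat.log 2 (rowWeight m s)) * Hmat m s t

/-!
Write `G = G(m, m)` and `𝓗 = 𝓗ₘ`. A top row of `H_{m+1}` is a row of `Hₘ` written twice, so its
weight doubles and its scaling exponent stays; a bottom row keeps its weight, so its exponent grows
by one. Hence `G(m+1, m+1) = [[G, G], [0, 2G]]`, which equals `[[U, 0], [U, −U]] · [[𝓗, 𝓗], [𝓗, −𝓗]]`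
if `G = U 𝓗`. Inductively `G(m, m) = Uₘ 𝓗ₘ` with `U_{m+1} = [[Uₘ, 0], [Uₘ, −Uₘ]]`, and every `Uₘ` is
an involution, so `G(m, m)` and `𝓗ₘ` have the same row lattice.
-/

open Matrix

lemma latticeOf_mul_subset {n : ℕ} (M A : Matrix (Fin n) (Fin n) ℤ) :
    latticeOf (M * A) ⊆ latticeOf A := by
  rintro x ⟨u, rfl⟩
  exact ⟨vecMul u M, by rw [vecMul_vecMul]⟩

lemma latticeOf_mul_of_mul_eq_one {n : ℕ} {U V : Matrix (Fin n) (Fin n) ℤ} (hVU : V * U = 1)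
    (A : Matrix (Fin n) (Fin n) ℤ) : latticeOf (U * A) = latticeOf A := by
  refine (latticeOf_mul_subset U A).antisymm ?_
  simpa [← Matrix.mul_assoc, hVU] using latticeOf_mul_subset V (U * A)

def blockEquiv (m : ℕ) : (Fin (2 ^ m) ⊕ Fin (2 ^ m)) ≃ Fin (2 ^ (m + 1)) :=
  finSumFinEquiv.trans (finCongr (by rw [pow_succ, mul_two]))

lemma hmat_succ (m : ℕ) : Hmat (m + 1) =
    reindex (blockEquiv m) (blockEquiv m) (fromBlocks (Hmat m) (Hmat m) 0 (Hmat m)) := rfl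

lemma smat_succ (m : ℕ) : Smat (m + 1) =
    reindex (blockEquiv m) (blockEquiv m) (fromBlocks (Smat m) (Smat m) (Smat m) (-Smat m)) := rfl

lemma rowWeight_eq_card (m : ℕ) (s : Fin (2 ^ m)) :
    rowWeight m s = Fintype.card {t // Hmat m s t ≠ 0} :=
  (Fintype.card_subtype _).symm

lemma rowWeight_succ (m : ℕ) (i : Fin (2 ^ m) ⊕ Fin (2 ^ m)) :
    rowWeight (m + 1) (blockEquiv m i) =
      Fintype.card {t // fromBlocks (Hmat m) (Hmat m) 0 (Hmat m) i (Sum.inl t) ≠ 0} +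
      Fintype.card {t // fromBlocks (Hmat m) (Hmat m) 0 (Hmat m) i (Sum.inr t) ≠ 0} := by
  rw [rowWeight_eq_card, ← Fintype.card_sum]
  refine Fintype.card_congr (Equiv.trans ?_
    (Equiv.subtypeSum (p := fun t => fromBlocks (Hmat m) (Hmat m) 0 (Hmat m) i t ≠ 0)))
  exact ((blockEquiv m).subtypeEquiv fun t => by simp [hmat_succ]).symm

lemma rowWeight_succ_inl (m : ℕ) (s : Fin (2 ^ m)) :
    rowWeight (m + 1) (blockEquiv m (Sum.inl s)) = 2 * rowWeight m s := by
  rw [rowWeight_succ, rowWeight_eq_card, two_mul]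
  rfl

lemma rowWeight_succ_inr (m : ℕ) (s : Fin (2 ^ m)) :
    rowWeight (m + 1) (blockEquiv m (Sum.inr s)) = rowWeight m s := by
  rw [rowWeight_succ, rowWeight_eq_card, Fintype.card_eq_zero_iff.2 ⟨fun t => t.2 rfl⟩, zero_add]
  rfl

lemma rowWeight_pos (m : ℕ) (s : Fin (2 ^ m)) : 0 < rowWeight m s := by
  induction m with
  | zero => simp [rowWeight, Hmat]
  | succ m ih =>
    obtain ⟨i | i, rfl⟩ := (blockEquiv m).surjective s
    · rw [rowWeight_succ_inl]; exact Nat.mul_pos two_pos (ih i)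
    · rw [rowWeight_succ_inr]; exact ih i

lemma log_rowWeight_le (m : ℕ) (s : Fin (2 ^ m)) : Nat.log 2 (rowWeight m s) ≤ m :=
  calc Nat.log 2 (rowWeight m s) ≤ Nat.log 2 (2 ^ m) :=
        Nat.log_mono_right ((Finset.card_filter_le _ _).trans_eq (by simp))
    _ = m := Nat.log_pow one_lt_two m

lemma gmat_succ_succ {m j : ℕ} (hmj : m ≤ j) : Gmat (m + 1) (j + 1) =
    reindex (blockEquiv m) (blockEquiv m)
      (fromBlocks (Gmat m j) (Gmat m j) 0 (2 • Gmat m j)) := by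
  ext s t
  obtain ⟨i | i, rfl⟩ := (blockEquiv m).surjective s
  · have hlog : Nat.log 2 (rowWeight (m + 1) (blockEquiv m (Sum.inl i))) =
        Nat.log 2 (rowWeight m i) + 1 := by
      rw [rowWeight_succ_inl, mul_comm, Nat.log_mul_base one_lt_two (rowWeight_pos m i).ne']
    obtain ⟨k | k, rfl⟩ := (blockEquiv m).surjective t <;>
      simp [Gmat, hmat_succ, hlog]
  · have hexp : j + 1 - Nat.log 2 (rowWeight m i) = j - Nat.log 2 (rowWeight m i) + 1 :=
      Nat.sub_add_comm ((log_rowWeight_le m i).trans hmj)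
    obtain ⟨k | k, rfl⟩ := (blockEquiv m).surjective t <;>
      simp [Gmat, hmat_succ, rowWeight_succ_inr, hexp, pow_succ, mul_comm, mul_left_comm]

def Umat : (m : ℕ) → Matrix (Fin (2 ^ m)) (Fin (2 ^ m)) ℤ
  | 0 => 1
  | m + 1 => reindex (blockEquiv m) (blockEquiv m) (fromBlocks (Umat m) 0 (Umat m) (-Umat m))

lemma umat_mul_self (m : ℕ) : Umat m * Umat m = 1 := by
  induction m with
  | zero => exact Matrix.one_mul 1
  | succ m ih => simp [Umat, submatrix_mul_equiv, fromBlocks_multiply, ih]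

lemma gmat_eq_umat_mul_smat (m : ℕ) : Gmat m m = Umat m * Smat m := by
  induction m with
  | zero => ext; simp [Gmat, Smat, Hmat, Umat, rowWeight]
  | succ m ih =>
    simp only [gmat_succ_succ le_rfl, smat_succ, Umat, reindex_apply, submatrix_mul_equiv,
      fromBlocks_multiply, ih]
    simp [two_smul]

/-- The lattice generated by the rows of `G(m, m)` equals the lattice generated by
the rows of the Sylvester Hadamard matrix `𝓗ₘ`. -/
theorem lattice_Gmm_eq_lattice_sylvester (m : ℕ) :
    latticeOf (Gmat m m) = latticeOf (Smat m) := by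
  rw [gmat_eq_umat_mul_smat]
  exact latticeOf_mul_of_mul_eq_one (umat_mul_self m) (Smat m)
end

section
/- Let W be a weighing matrix of order n and weight w ≥ 1 that is symmetric or skew-symmetric, and let s be a positive integer dividing w. Then every nonzero x ∈ Λ^W_s has Manhattan weight at least s, and for each coordinate j the vector s·eⱼ belongs to Λ^W_s; that is, the minimum Manhattan distance of the lattice Λ^W_s equals s. -/
/-- `Λ^W_s`: the set of `x ∈ ℤⁿ` such that `s` divides every entry of `W · x`. -/
def LambdaWs {n : ℕ} (W : Matrix (Fin n) (Fin n) ℤ) (s : ℕ) : Set (Fin n → ℤ) :=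
  { x | ∀ i, (s : ℤ) ∣ W.mulVec x i }

/-- For a symmetric or skew-symmetric weighing matrix `W` of weight `w ≥ 1` and a
positive divisor `s` of `w`, the minimum Manhattan distance of `Λ^W_s` equals
`s`: every nonzero point has Manhattan weight at least `s`, and `s • eⱼ ∈ Λ^W_s`
for every coordinate `j`. -/
theorem min_manhattan_distance_LambdaWs
    (n w : ℕ) (hw : 1 ≤ w) (W : Matrix (Fin n) (Fin n) ℤ)
    (hW : IsWeighing n w W) (hsym : W.transpose = W ∨ W.transpose = -W)
    (s : ℕ) (hs : 0 < s) (hsw : s ∣ w) :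
    (∀ x ∈ LambdaWs W s, x ≠ 0 → (s : ℤ) ≤ ∑ i, |x i|) ∧
    (∀ j : Fin n, (Pi.single j (s : ℤ) : Fin n → ℤ) ∈ LambdaWs W s) := by
  obtain ⟨hent, _, _, horth⟩ := hW
  have habs : ∀ i j, |W i j| ≤ 1 := by
    intro i j
    rcases hent i j with h | h | h <;> simp [h]
  -- Wᵀ * W = w • 1
  have hWtW : W.transpose * W = (w : ℤ) • (1 : Matrix (Fin n) (Fin n) ℤ) := by
    rcases hsym with h | h
    · rw [h]; rw [h] at horth; exact horth
    · rw [h] at horth ⊢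
      rw [Matrix.mul_neg] at horth
      rw [Matrix.neg_mul]
      rw [show W * W = -((w:ℤ) • (1 : Matrix (Fin n) (Fin n) ℤ)) from by
        have := congrArg Neg.neg horth; simpa using this]
      simp
  constructor
  · intro x hx hx0
    set y := W.mulVec x with hy
    have hyne : y ≠ 0 := by
      intro h0
      apply hx0
      have : W.transpose.mulVec y = (w : ℤ) • x := by
        rw [hy, Matrix.mulVec_mulVec, hWtW, Matrix.smul_mulVec,
          Matrix.one_mulVec]
      rw [h0, Matrix.mulVec_zero] at this
      have hwx : (w : ℤ) • x = 0 := this.symm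
      have hwne : (w : ℤ) ≠ 0 := by positivity
      funext i
      have := congrFun hwx i
      simp only [Pi.smul_apply, smul_eq_mul, Pi.zero_apply] at this
      exact (mul_eq_zero.mp this).resolve_left hwne
    obtain ⟨i, hi⟩ := Function.ne_iff.mp hyne
    have hdvd : (s : ℤ) ∣ y i := hx i
    have h1 : (s : ℤ) ≤ |y i| := Int.le_of_dvd (abs_pos.mpr hi) ((dvd_abs _ _).mpr hdvd)
    have h2 : |y i| ≤ ∑ j, |x j| := by
      calc |y i| = |∑ j, W i j * x j| := by rw [hy]; rfl
        _ ≤ ∑ j, |W i j * x j| := Finset.abs_sum_le_sum_abs _ _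
        _ ≤ ∑ j, |x j| := by
            apply Finset.sum_le_sum
            intro j _
            rw [abs_mul]
            calc |W i j| * |x j| ≤ 1 * |x j| :=
              mul_le_mul_of_nonneg_right (habs i j) (abs_nonneg _)
              _ = |x j| := one_mul _
    linarith
  · intro j i
    have : W.mulVec (Pi.single j (s : ℤ)) i = W i j * s := by
      simp [Matrix.mulVec, dotProduct, Pi.single_apply, mul_ite,
        Finset.sum_ite_eq' Finset.univ j]
    rw [this]
    exact Dvd.dvd.mul_left (dvd_refl _) _
end

section
/- Let W be a weighing matrix of order n and weight w ≥ 1 that is symmetric or skew-symmetric, and let s be a positive integer dividing w. Then Λ^W_s = { (s/w)·W·y : y ∈ Λ^W_{w/s} }; that is, a vector x ∈ ℤⁿ satisfies s ∣ (W·x)ᵢ for every i if and only if there exists y ∈ ℤⁿ with (w/s) ∣ (W·y)ᵢ for every i such that w·x = s·(W·y). -/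
/-- For a symmetric or skew-symmetric weighing matrix `W` of weight `w ≥ 1` and a
positive divisor `s` of `w`, `Λ^W_s = T^W_{w/s}(Λ^W_{w/s})`, i.e.
`Λ^W_s = { (s/w)·W·y : y ∈ Λ^W_{w/s} }`. -/
theorem LambdaWs_eq_image_transform
    (n w : ℕ) (hw : 1 ≤ w) (W : Matrix (Fin n) (Fin n) ℤ)
    (hW : IsWeighing n w W) (hsym : W.transpose = W ∨ W.transpose = -W)
    (s : ℕ) (hs : 0 < s) (hsw : s ∣ w) :
    LambdaWs W s
      = { x | ∃ y ∈ LambdaWs W (w / s), (w : ℤ) • x = (s : ℤ) • W.mulVec y } := by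
  obtain ⟨-, -, -, hWWt⟩ := hW
  obtain ⟨t, ht⟩ := hsw
  have hts : w / s = t := by rw [ht, Nat.mul_div_cancel_left t hs]
  obtain ⟨ε, hε2, hWW⟩ : ∃ ε : ℤ, ε * ε = 1 ∧ W * W = (ε * w) • 1 := by
    rcases hsym with h | h
    · exact ⟨1, by ring, by rw [one_mul, ← hWWt, h]⟩
    · refine ⟨-1, by ring, ?_⟩
      have h2 : W = -W.transpose := by rw [h, neg_neg]
      calc W * W = -(W * W.transpose) := by rw [← Matrix.mul_neg, ← h2]
        _ = ((-1 : ℤ) * w) • 1 := by rw [hWWt, neg_mul, one_mul, neg_smul]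
  have hmm : ∀ v : Fin n → ℤ, W.mulVec (W.mulVec v) = (ε * w) • v := by
    intro v
    rw [Matrix.mulVec_mulVec, hWW, Matrix.smul_mulVec, Matrix.one_mulVec]
  have hspos : (0:ℤ) < s := by exact_mod_cast hs
  have hwpos : (0:ℤ) < w := by exact_mod_cast hw
  ext x
  simp only [LambdaWs, Set.mem_setOf_eq, hts]
  constructor
  · intro hx
    choose z hz using hx
    refine ⟨ε • z, ?_, ?_⟩
    · intro i
      have hzv : W.mulVec x = (s:ℤ) • z := by
        funext i; simpa [Pi.smul_apply, smul_eq_mul] using hz i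
      have h1 : W.mulVec ((s:ℤ) • z) = (ε * w) • x := by rw [← hzv, hmm]
      rw [Matrix.mulVec_smul] at h1
      have h2 : (s:ℤ) * W.mulVec z i = ε * w * x i := by
        have := congrFun h1 i; simpa [smul_eq_mul] using this
      have h3 : W.mulVec z i = ε * t * x i := by
        have : (s:ℤ) * W.mulVec z i = (s:ℤ) * (ε * t * x i) := by
          rw [h2]; push_cast [ht]; ring
        exact mul_left_cancel₀ (ne_of_gt hspos) this
      have : W.mulVec (ε • z) i = (t:ℤ) * x i := by
        rw [Matrix.mulVec_smul]
        simp only [Pi.smul_apply, smul_eq_mul, h3]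
        rw [← mul_assoc, ← mul_assoc, hε2, one_mul]
      exact ⟨x i, this⟩
    · funext i
      have h3 : W.mulVec (ε • z) i = (t:ℤ) * x i := by
        have hzv : W.mulVec x = (s:ℤ) • z := by
          funext i; simpa [Pi.smul_apply, smul_eq_mul] using hz i
        have h1 : W.mulVec ((s:ℤ) • z) = (ε * w) • x := by rw [← hzv, hmm]
        rw [Matrix.mulVec_smul] at h1
        have h2 : (s:ℤ) * W.mulVec z i = ε * w * x i := by
          have := congrFun h1 i; simpa [smul_eq_mul] using this
        have h3 : W.mulVec z i = ε * t * x i := by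
          have : (s:ℤ) * W.mulVec z i = (s:ℤ) * (ε * t * x i) := by
            rw [h2]; push_cast [ht]; ring
          exact mul_left_cancel₀ (ne_of_gt hspos) this
        rw [Matrix.mulVec_smul]
        simp only [Pi.smul_apply, smul_eq_mul, h3]
        rw [← mul_assoc, ← mul_assoc, hε2, one_mul]
      simp only [Pi.smul_apply, smul_eq_mul, h3]
      push_cast [ht]; ring
  · rintro ⟨y, hy, heq⟩
    intro i
    have h1 : (w:ℤ) • W.mulVec x = (s:ℤ) • W.mulVec (W.mulVec y) := by
      rw [← Matrix.mulVec_smul, ← Matrix.mulVec_smul, heq]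
    rw [hmm] at h1
    have h2 : (w:ℤ) * W.mulVec x i = (w:ℤ) * ((s:ℤ) * (ε * y i)) := by
      have := congrFun h1 i; simp only [Pi.smul_apply, smul_eq_mul] at this
      rw [this]; ring
    have h3 : W.mulVec x i = (s:ℤ) * (ε * y i) :=
      mul_left_cancel₀ (ne_of_gt hwpos) h2
    exact ⟨ε * y i, h3⟩
end

section
/- Let H be a Hadamard matrix of order n > 4 and let s be an even positive integer dividing n. Then the minimum, over all x ∈ Λ^H_s having at least one entry not divisible by s, of the Lee weight modulo s of x equals s: every such x has Lee weight modulo s at least s, and some such x has Lee weight modulo s exactly s. (That is, the code C^H_s over ℤ_s obtained by reducing Λ^H_s modulo s has minimum Lee distance s.) -/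
/-- A Hadamard matrix of order `n`: entries in `{1, -1}` and `H * Hᵀ = n • 1`. -/
def IsHadamard (n : ℕ) (H : Matrix (Fin n) (Fin n) ℤ) : Prop :=
  (∀ i j, H i j = 1 ∨ H i j = -1) ∧
  H * H.transpose = (n : ℤ) • (1 : Matrix (Fin n) (Fin n) ℤ)

/-- The Lee weight modulo `s` of `x ∈ ℤⁿ`: `Σᵢ min(xᵢ mod s, s − (xᵢ mod s))`. -/
def leeWeight {n : ℕ} (s : ℕ) (x : Fin n → ℤ) : ℤ :=
  ∑ i, min (x i % (s : ℤ)) ((s : ℤ) - x i % (s : ℤ))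

lemma hadamard_transpose_mul_self {n : ℕ} (H : Matrix (Fin n) (Fin n) ℤ)
    (hn : 0 < n) (h : H * H.transpose = (n : ℤ) • 1) :
    H.transpose * H = (n : ℤ) • 1 := by
  have hn' : (n : ℚ) ≠ 0 := Nat.cast_ne_zero.mpr hn.ne'
  set f := Int.castRingHom ℚ
  have hscal : ((n : ℤ) • (1 : Matrix (Fin n) (Fin n) ℤ)).map ⇑f = (n : ℚ) • 1 := by
    ext i j
    simp only [Matrix.map_apply, Matrix.smul_apply, Matrix.one_apply, smul_eq_mul]
    split <;> simp
  have hmap : ∀ (A B : Matrix (Fin n) (Fin n) ℤ), A * B = (n : ℤ) • 1 ↔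
      (A.map f) * (B.map f) = (n : ℚ) • 1 := by
    intro A B
    constructor
    · intro hAB
      rw [← Matrix.map_mul, hAB, hscal]
    · intro hAB
      have hm : (A * B).map ⇑f = ((n : ℤ) • (1 : Matrix (Fin n) (Fin n) ℤ)).map ⇑f := by
        rw [Matrix.map_mul, hAB, hscal]
      ext i j
      have h2 := congrArg (fun M => M i j) hm
      simp only [Matrix.map_apply] at h2
      exact Int.cast_injective h2
  have h1 : (H.map f) * (H.transpose.map f) = (n : ℚ) • 1 := (hmap _ _).mp h
  have h2 : (H.map f) * ((n : ℚ)⁻¹ • (H.transpose.map f)) = 1 := by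
    rw [Matrix.mul_smul, h1, smul_smul, inv_mul_cancel₀ hn', one_smul]
  have h3 : ((n : ℚ)⁻¹ • (H.transpose.map f)) * (H.map f) = 1 :=
    mul_eq_one_comm.mp h2
  have h4 : (H.transpose.map f) * (H.map f) = (n : ℚ) • 1 := by
    have := congrArg (fun M => (n : ℚ) • M) h3
    simpa [Matrix.smul_mul, smul_smul, mul_inv_cancel₀ hn'] using this
  exact (hmap _ _).mpr h4

/-- Let `H` be a Hadamard matrix of order `n > 4` and `s` an even positive divisor
of `n`. Then the minimum Lee weight modulo `s` over all `x ∈ Λ^H_s` having an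
entry not divisible by `s` equals `s`. -/
theorem min_lee_distance_hadamard_even
    (n s : ℕ) (H : Matrix (Fin n) (Fin n) ℤ) (hH : IsHadamard n H)
    (hn : 4 < n) (hs : 0 < s) (hse : Even s) (hsd : s ∣ n) :
    (∀ x ∈ LambdaWs H s, (∃ i, ¬ (s : ℤ) ∣ x i) → (s : ℤ) ≤ leeWeight s x) ∧
    (∃ x ∈ LambdaWs H s, (∃ i, ¬ (s : ℤ) ∣ x i) ∧ leeWeight s x = (s : ℤ)) := by
  obtain ⟨hent, hmul⟩ := hH
  have hn0 : 0 < n := by omega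
  have hsZ : (0 : ℤ) < (s : ℤ) := by exact_mod_cast hs
  have hTH := hadamard_transpose_mul_self H hn0 hmul
  constructor
  · rintro x hx ⟨i0, hi0⟩
    set z : Fin n → ℤ := fun i =>
      if 2 * (x i % (s : ℤ)) ≤ (s : ℤ) then x i % (s : ℤ) else x i % (s : ℤ) - s with hzdef
    have hr0 : ∀ i, 0 ≤ x i % (s : ℤ) := fun i => Int.emod_nonneg _ hsZ.ne'
    have hrs : ∀ i, x i % (s : ℤ) < (s : ℤ) := fun i => Int.emod_lt_of_pos _ hsZ
    have habs : ∀ i, |z i| = min (x i % (s : ℤ)) ((s : ℤ) - x i % (s : ℤ)) := by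
      intro i
      have h1 := hr0 i; have h2 := hrs i
      by_cases h : 2 * (x i % (s : ℤ)) ≤ (s : ℤ)
      · simp only [hzdef, if_pos h]
        rw [abs_of_nonneg h1, min_eq_left (by omega)]
      · simp only [hzdef, if_neg h]
        rw [abs_of_nonpos (by omega), min_eq_right (by omega)]
        ring
    have hdvd : ∀ i, (s : ℤ) ∣ (z i - x i) := by
      intro i
      have h1 : (s : ℤ) ∣ (x i % (s : ℤ) - x i) := ⟨-(x i / s), by rw [Int.emod_def]; ring⟩
      by_cases h : 2 * (x i % (s : ℤ)) ≤ (s : ℤ)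
      · simpa [hzdef, if_pos h] using h1
      · have : z i - x i = (x i % (s : ℤ) - x i) - s := by simp only [hzdef, if_neg h]; ring
        rw [this]
        exact dvd_sub h1 dvd_rfl
    have hHz : ∀ k, (s : ℤ) ∣ H.mulVec z k := by
      intro k
      have hdiff : (s : ℤ) ∣ (H.mulVec z k - H.mulVec x k) := by
        simp only [Matrix.mulVec, dotProduct]
        rw [← Finset.sum_sub_distrib]
        exact Finset.dvd_sum fun i _ => by rw [← mul_sub]; exact (hdvd i).mul_left _
      have := dvd_add hdiff (hx k)
      simpa using this
    have hz0 : z i0 ≠ 0 := by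
      have hr0' : x i0 % (s : ℤ) ≠ 0 := fun h => hi0 (Int.dvd_of_emod_eq_zero h)
      have h1 := hr0 i0; have h2 := hrs i0
      by_cases h : 2 * (x i0 % (s : ℤ)) ≤ (s : ℤ) <;>
        simp only [hzdef, if_pos, if_neg, h, if_true, if_false] <;> omega
    have hne : ∃ k, H.mulVec z k ≠ 0 := by
      by_contra hcon
      push_neg at hcon
      have hz : H.mulVec z = 0 := funext hcon
      have : (n : ℤ) • z = 0 := by
        have h5 : (H.transpose * H).mulVec z = 0 := by
          rw [← Matrix.mulVec_mulVec, hz, Matrix.mulVec_zero]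
        rw [hTH, Matrix.smul_mulVec, Matrix.one_mulVec] at h5
        exact h5
      have := congrFun this i0
      simp only [Pi.smul_apply, Pi.zero_apply, smul_eq_mul, mul_eq_zero] at this
      rcases this with h | h
      · exact absurd h (by exact_mod_cast hn0.ne')
      · exact hz0 h
    obtain ⟨k, hk⟩ := hne
    have hle1 : (s : ℤ) ≤ |H.mulVec z k| :=
      Int.le_of_dvd (abs_pos.mpr hk) ((dvd_abs _ _).mpr (hHz k))
    have hle2 : |H.mulVec z k| ≤ ∑ i, |z i| := by
      simp only [Matrix.mulVec, dotProduct]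
      refine le_trans (Finset.abs_sum_le_sum_abs _ _) ?_
      refine Finset.sum_le_sum fun i _ => ?_
      rw [abs_mul]
      rcases hent k i with h | h <;> simp [h]
    have hsum : ∑ i, |z i| = leeWeight s x := by
      unfold leeWeight
      exact Finset.sum_congr rfl fun i _ => habs i
    linarith
  · set t : ℕ := s / 2 with htdef
    have ht : 2 * t = s := Nat.mul_div_cancel' hse.two_dvd
    have htz : 2 * (t : ℤ) = (s : ℤ) := by exact_mod_cast ht
    have hs2 : 2 ≤ s := by
      rcases hse with ⟨r, hr⟩; omega
    have htpos : (0 : ℤ) < t := by omega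
    set i0 : Fin n := ⟨0, by omega⟩ with hi0def
    set i1 : Fin n := ⟨1, by omega⟩ with hi1def
    have h01 : i0 ≠ i1 := by simp [hi0def, hi1def, Fin.ext_iff]
    set x : Fin n → ℤ := fun i => if i = i0 ∨ i = i1 then (t : ℤ) else 0 with hxdef
    have hx0 : x i0 = (t : ℤ) := by simp [hxdef]
    have hx1 : x i1 = (t : ℤ) := by simp [hxdef]
    have hsum : ∀ k, H.mulVec x k = (H k i0 + H k i1) * t := by
      intro k
      simp only [Matrix.mulVec, dotProduct]
      rw [Finset.sum_eq_add i0 i1 h01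
          (fun c _ hc => by simp [hxdef, hc.1, hc.2])
          (fun h => absurd (Finset.mem_univ _) h)
          (fun h => absurd (Finset.mem_univ _) h)]
      rw [hx0, hx1]; ring
    refine ⟨x, ?_, ⟨i0, ?_⟩, ?_⟩
    · intro k
      rw [hsum k]
      rcases hent k i0 with h0 | h0 <;> rcases hent k i1 with h1 | h1 <;> rw [h0, h1]
      · exact ⟨1, by ring_nf; omega⟩
      · exact ⟨0, by ring⟩
      · exact ⟨0, by ring⟩
      · exact ⟨-1, by ring_nf; omega⟩
    · rw [hx0]
      intro hdv
      have := Int.le_of_dvd htpos hdv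
      omega
    · unfold leeWeight
      have hmt : (t : ℤ) % (s : ℤ) = t := Int.emod_eq_of_lt (by omega) (by omega)
      rw [Finset.sum_eq_add i0 i1 h01
          (fun c _ hc => by
            simp only [hxdef, if_neg (by simp [hc.1, hc.2] : ¬(c = i0 ∨ c = i1))]
            simp only [Int.zero_emod]
            omega)
          (fun h => absurd (Finset.mem_univ _) h)
          (fun h => absurd (Finset.mem_univ _) h)]
      rw [hx0, hx1, hmt]
      omega
end

section
/- Let H be a Hadamard matrix of order n > 4 and let s be an odd integer with s > 1 dividing n. Then every x ∈ Λ^H_s having at least one entry not divisible by s has Lee weight modulo s strictly greater than s, and there exists such an x whose Lee weight modulo s is at most n/2. (That is, the minimum Lee distance of the code C^H_s over ℤ_s obtained by reducing Λ^H_s modulo s is greater than s and at most n/2.) -/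
open Matrix Finset

/-! Replace `x` by its balanced residues `y` modulo `s`, so that the Lee weight is `∑ |yₖ|`,
`2 |yₖ| < s` and still `s ∣ H y`. Since `‖H y‖² = n ‖y‖²`, `H y ≠ 0`, and a nonzero entry of
`H y` is a multiple of `s` bounded by `∑ |yₖ|`; so the weight is at least `s`. It cannot equal
`s`: every `(H y)ᵢ ≡ ∑ |yₖ| = s` is odd, hence `|(H y)ᵢ| ≥ s` for all `i`, and then
`n s² ≤ n ‖y‖² ≤ n (s - 1) s / 2`.

For the upper bound take `x = (s + 1)/2 · (h₀ + h₁)` for two rows of `H`: then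
`H x = (s + 1)/2 · n (e₀ + e₁)` is divisible by `s`, and `x` has entries `±(s + 1) ≡ ±1` where
the rows agree (at `n/2` places by orthogonality) and `0` elsewhere. -/

theorem Int.min_emod_sub_emod_eq_abs_bmod {s : ℕ} (hs : 0 < s) (a : ℤ) :
    min (a % s) (s - a % s) = |a.bmod s| := by
  have h0 : 0 ≤ a % s := Int.emod_nonneg _ (by omega)
  have h1 : a % s < s := Int.emod_lt_of_pos _ (by omega)
  rw [Int.bmod_def]
  split_ifs with h
  · rw [abs_of_nonneg h0]; omega
  · rw [abs_of_neg (by omega)]; omega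

theorem Int.two_mul_abs_bmod_lt_of_odd {s : ℕ} (hs : Odd s) (a : ℤ) : 2 * |a.bmod s| < s := by
  have hlo := Int.le_bmod (x := a) hs.pos
  have hhi := Int.bmod_lt (x := a) hs.pos
  obtain ⟨m, rfl⟩ := hs
  cases abs_cases (a.bmod (2 * m + 1)) <;> omega

theorem Int.abs_bmod_eq_one_of_abs_eq_one {s : ℕ} (hs : 3 ≤ s) {a : ℤ} (ha : |a| = 1) :
    |a.bmod s| = 1 := by
  rcases (abs_eq zero_le_one).1 ha with rfl | rfl
  · rw [Int.one_bmod hs, abs_one]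
  · rw [Int.neg_bmod]
    split_ifs <;> simp [Int.one_bmod hs]

theorem Matrix.transpose_mul_self_eq_smul_one {m K : Type*} [Fintype m] [DecidableEq m] [Field K]
    {A : Matrix m m K} {c : K} (hc : c ≠ 0) (hA : A * Aᵀ = c • 1) : Aᵀ * A = c • 1 := by
  have hinv : (c⁻¹ • Aᵀ) * A = 1 :=
    mul_eq_one_comm.mp (by rw [mul_smul_comm, hA, smul_smul, inv_mul_cancel₀ hc, one_smul])
  rw [smul_mul_assoc] at hinv
  rw [← hinv, smul_smul, mul_inv_cancel₀ hc, one_smul]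

theorem Matrix.dvd_mulVec_apply_of_forall_dvd {m ι : Type*} [Fintype ι] (W : Matrix m ι ℤ)
    {d : ℤ} {v : ι → ℤ} (hv : ∀ k, d ∣ v k) (i : m) : d ∣ (W *ᵥ v) i :=
  Finset.dvd_sum fun k _ => dvd_mul_of_dvd_right (hv k) _

theorem two_mul_card_filter_eq_of_dotProduct_eq_zero {ι : Type*} [Fintype ι] [DecidableEq ι]
    {u v : ι → ℤ} (hu : ∀ k, u k = 1 ∨ u k = -1) (hv : ∀ k, v k = 1 ∨ v k = -1)
    (huv : u ⬝ᵥ v = 0) : 2 * #{k | u k = v k} = Fintype.card ι := by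
  have hterm : ∀ k, u k * v k = 2 * (if u k = v k then 1 else 0) - 1 := fun k => by
    rcases hu k with h | h <;> rcases hv k with h' | h' <;> simp [h, h']
  simp only [dotProduct, hterm, sum_sub_distrib, ← mul_sum, sum_boole, sum_const, card_univ,
    nsmul_eq_mul, mul_one] at huv
  omega

theorem leeWeight_eq_sum_abs_bmod {n s : ℕ} (hs : 0 < s) (x : Fin n → ℤ) :
    leeWeight s x = ∑ i, |(x i).bmod s| :=
  sum_congr rfl fun i _ => Int.min_emod_sub_emod_eq_abs_bmod hs (x i)

theorem leeWeight_eq_zero_of_forall_dvd {n s : ℕ} {x : Fin n → ℤ} (hx : ∀ i, (s : ℤ) ∣ x i) :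
    leeWeight s x = 0 :=
  sum_eq_zero fun i _ => by simp [Int.emod_eq_zero_of_dvd (hx i)]

theorem leeWeight_smul_add_eq_card {n s : ℕ} (hs : 3 ≤ s) {c : ℤ} (hc : 2 * c = s + 1)
    {u v : Fin n → ℤ} (hu : ∀ k, u k = 1 ∨ u k = -1) (hv : ∀ k, v k = 1 ∨ v k = -1) :
    leeWeight s (c • (u + v)) = #{k | u k = v k} := by
  rw [leeWeight_eq_sum_abs_bmod (by omega), ← sum_boole]
  refine sum_congr rfl fun k _ => ?_
  simp only [Pi.smul_apply, Pi.add_apply, smul_eq_mul]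
  by_cases huv : u k = v k
  · have hentry : c * (u k + v k) = u k + s * u k := by
      rw [← huv]; linear_combination u k * hc
    rw [hentry, Int.add_mul_bmod_self_left, if_pos huv]
    exact Int.abs_bmod_eq_one_of_abs_eq_one hs ((abs_eq zero_le_one).2 (hu k))
  · have hentry : u k + v k = 0 := by
      rcases hu k with h | h <;> rcases hv k with h' | h' <;> omega
    simp [hentry, huv]

theorem bmod_mem_lambdaWs {n s : ℕ} {W : Matrix (Fin n) (Fin n) ℤ} {x : Fin n → ℤ}
    (hx : x ∈ LambdaWs W s) : (fun i => (x i).bmod s) ∈ LambdaWs W s := fun i => by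
  have hsplit : W *ᵥ (fun i => (x i).bmod s) = W *ᵥ x - W *ᵥ (fun i => x i - (x i).bmod s) := by
    rw [← mulVec_sub]; congr 1; ext; simp
  rw [hsplit]
  exact dvd_sub (hx i) (W.dvd_mulVec_apply_of_forall_dvd (fun k => Int.dvd_self_sub_bmod) i)

namespace IsHadamard
variable {n : ℕ} {H : Matrix (Fin n) (Fin n) ℤ}

theorem transpose_mul_self (hH : IsHadamard n H) : Hᵀ * H = (n : ℤ) • 1 := by
  rcases Nat.eq_zero_or_pos n with rfl | hn
  · exact Subsingleton.elim _ _
  let f := Int.castRingHom ℚ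
  have hscalar : ((n : ℤ) • (1 : Matrix (Fin n) (Fin n) ℤ)).map f = (n : ℚ) • 1 := by
    ext i j
    simp only [Matrix.map_apply, Matrix.smul_apply, Matrix.one_apply, smul_eq_mul]
    split_ifs <;> simp [f]
  have hQ := congrArg (Matrix.map · f) hH.2
  apply Matrix.map_injective f.injective_int
  dsimp only at hQ ⊢
  rw [Matrix.map_mul, Matrix.transpose_map, hscalar] at hQ ⊢
  exact Matrix.transpose_mul_self_eq_smul_one (by positivity) hQ

theorem dotProduct_row_eq_zero (hH : IsHadamard n H) {i j : Fin n} (hij : i ≠ j) :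
    H i ⬝ᵥ H j = 0 := by
  simpa [Matrix.mul_apply, Matrix.one_apply, hij, dotProduct] using congrFun₂ hH.2 i j

theorem mulVec_dotProduct_mulVec (hH : IsHadamard n H) (y : Fin n → ℤ) :
    (H *ᵥ y) ⬝ᵥ (H *ᵥ y) = n * (y ⬝ᵥ y) := by
  rw [dotProduct_mulVec, ← vecMul_transpose, vecMul_vecMul, hH.transpose_mul_self, vecMul_smul,
    vecMul_one, smul_dotProduct, smul_eq_mul]

theorem abs_mulVec_apply_le (hH : IsHadamard n H) (y : Fin n → ℤ) (i : Fin n) :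
    |(H *ᵥ y) i| ≤ ∑ k, |y k| :=
  (abs_sum_le_sum_abs (fun k => H i k * y k) univ).trans_eq <| sum_congr rfl fun k _ => by
    rcases hH.1 i k with h | h <;> simp [h]

theorem mulVec_apply_modEq_sum_abs (hH : IsHadamard n H) (y : Fin n → ℤ) (i : Fin n) :
    (H *ᵥ y) i ≡ ∑ k, |y k| [ZMOD 2] := by
  have hterm : ∀ k, H i k * y k ≡ |y k| [ZMOD 2] := fun k => by
    rw [Int.modEq_iff_dvd]
    rcases hH.1 i k with h | h <;> rcases abs_cases (y k) with ⟨h', _⟩ | ⟨h', _⟩ <;>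
      rw [h, h'] <;> omega
  exact Int.ModEq.sum (s := univ) fun k _ => hterm k

theorem transpose_mulVec_mem_lambdaWs (hH : IsHadamard n H) {s : ℕ} (hsd : s ∣ n)
    (v : Fin n → ℤ) : Hᵀ *ᵥ v ∈ LambdaWs H s := fun i => by
  rw [mulVec_mulVec, hH.2, smul_mulVec, one_mulVec, Pi.smul_apply, smul_eq_mul]
  exact (Int.natCast_dvd_natCast.2 hsd).mul_right _

theorem le_sum_abs_of_dvd_mulVec (hH : IsHadamard n H) {s : ℕ} {y : Fin n → ℤ}
    (hy : ∀ i, (s : ℤ) ∣ (H *ᵥ y) i) (hne : y ≠ 0) : (s : ℤ) ≤ ∑ k, |y k| := by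
  have hHy : H *ᵥ y ≠ 0 := by
    intro h0
    obtain ⟨k, -⟩ := Function.ne_iff.1 hne
    have := hH.mulVec_dotProduct_mulVec y
    rw [h0, zero_dotProduct, eq_comm, mul_eq_zero, dotProduct_self_eq_zero] at this
    exact this.elim (fun hn => absurd k.pos (by omega)) hne
  obtain ⟨i, hi⟩ := Function.ne_iff.1 hHy
  calc (s : ℤ) ≤ |(H *ᵥ y) i| := Int.le_of_dvd (abs_pos.2 hi) ((dvd_abs _ _).2 (hy i))
    _ ≤ ∑ k, |y k| := hH.abs_mulVec_apply_le y i

theorem sum_abs_ne_of_dvd_mulVec (hH : IsHadamard n H) {s : ℕ} (hs : Odd s) {y : Fin n → ℤ}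
    (hy : ∀ i, (s : ℤ) ∣ (H *ᵥ y) i) (hsmall : ∀ k, 2 * |y k| < s) (hne : y ≠ 0) :
    ∑ k, |y k| ≠ s := by
  intro hw
  obtain ⟨k, -⟩ := Function.ne_iff.1 hne
  have hn : (0 : ℤ) < n := by exact_mod_cast k.pos
  have hsq : ∀ i, (s : ℤ) ^ 2 ≤ (H *ᵥ y) i * (H *ᵥ y) i := fun i => by
    have hodd : Odd ((H *ᵥ y) i) := by
      rw [Int.odd_iff, hH.mulVec_apply_modEq_sum_abs y i, hw]
      exact Int.odd_iff.1 (by exact_mod_cast hs)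
    have hne0 : (H *ᵥ y) i ≠ 0 := fun h => by simp [h] at hodd
    have := Int.le_of_dvd (abs_pos.2 hne0) ((dvd_abs _ _).2 (hy i))
    nlinarith [abs_mul_abs_self ((H *ᵥ y) i)]
  have hlow : (n : ℤ) * s ^ 2 ≤ n * (y ⬝ᵥ y) :=
    calc (n : ℤ) * s ^ 2 = ∑ _i : Fin n, (s : ℤ) ^ 2 := by simp
      _ ≤ (H *ᵥ y) ⬝ᵥ (H *ᵥ y) := sum_le_sum fun i _ => hsq i
      _ = n * (y ⬝ᵥ y) := hH.mulVec_dotProduct_mulVec y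
  have hup : 2 * (y ⬝ᵥ y) ≤ (s - 1) * ∑ k, |y k| := by
    rw [mul_sum, dotProduct, mul_sum]
    refine sum_le_sum fun k _ => ?_
    nlinarith [hsmall k, abs_mul_abs_self (y k), abs_nonneg (y k)]
  have : (s : ℤ) ^ 2 ≤ y ⬝ᵥ y := le_of_mul_le_mul_left hlow hn
  rw [hw] at hup
  nlinarith [(by exact_mod_cast hs.pos : (0 : ℤ) < s)]

theorem lt_sum_abs_of_dvd_mulVec (hH : IsHadamard n H) {s : ℕ} (hs : Odd s) {y : Fin n → ℤ}
    (hy : ∀ i, (s : ℤ) ∣ (H *ᵥ y) i) (hsmall : ∀ k, 2 * |y k| < s) (hne : y ≠ 0) :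
    (s : ℤ) < ∑ k, |y k| :=
  (hH.le_sum_abs_of_dvd_mulVec hy hne).lt_of_ne
    (hH.sum_abs_ne_of_dvd_mulVec hs hy hsmall hne).symm

end IsHadamard

/-- Let `H` be a Hadamard matrix of order `n > 4` and `s > 1` an odd divisor of
`n`. Then every `x ∈ Λ^H_s` with an entry not divisible by `s` has Lee weight
modulo `s` strictly greater than `s`, and some such `x` has Lee weight modulo
`s` at most `n/2`. -/
theorem min_lee_distance_hadamard_odd
    (n s : ℕ) (H : Matrix (Fin n) (Fin n) ℤ) (hH : IsHadamard n H)
    (hn : 4 < n) (hs : 1 < s) (hso : Odd s) (hsd : s ∣ n) :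
    (∀ x ∈ LambdaWs H s, (∃ i, ¬ (s : ℤ) ∣ x i) → (s : ℤ) < leeWeight s x) ∧
    (∃ x ∈ LambdaWs H s, (∃ i, ¬ (s : ℤ) ∣ x i) ∧ leeWeight s x ≤ ((n / 2 : ℕ) : ℤ)) := by
  have hs3 : 3 ≤ s := by obtain ⟨m, rfl⟩ := hso; omega
  refine ⟨fun x hx ⟨i, hi⟩ => ?_, ?_⟩
  · rw [leeWeight_eq_sum_abs_bmod (by omega)]
    refine hH.lt_sum_abs_of_dvd_mulVec hso (bmod_mem_lambdaWs hx)
      (fun k => Int.two_mul_abs_bmod_lt_of_odd hso _) ?_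
    exact Function.ne_iff.2 ⟨i, fun h => hi (Int.dvd_of_bmod_eq_zero h)⟩
  · obtain ⟨c, hc⟩ : ∃ c : ℤ, 2 * c = s + 1 := by
      obtain ⟨m, rfl⟩ := hso
      exact ⟨m + 1, by push_cast; ring⟩
    let i₀ : Fin n := ⟨0, by omega⟩
    let i₁ : Fin n := ⟨1, by omega⟩
    have hcard := two_mul_card_filter_eq_of_dotProduct_eq_zero (hH.1 i₀) (hH.1 i₁)
      (hH.dotProduct_row_eq_zero (i := i₀) (j := i₁) (by simp [i₀, i₁, Fin.ext_iff]))
    have hlee := leeWeight_smul_add_eq_card hs3 hc (hH.1 i₀) (hH.1 i₁)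
    rw [Fintype.card_fin] at hcard
    refine ⟨c • (H i₀ + H i₁), ?_, ?_, ?_⟩
    · have hx : c • (H i₀ + H i₁) = Hᵀ *ᵥ (c • (Pi.single i₀ 1 + Pi.single i₁ 1)) := by
        rw [mulVec_smul, mulVec_add, mulVec_single_one, mulVec_single_one]
        rfl
      rw [hx]
      exact hH.transpose_mulVec_mem_lambdaWs hsd _
    · by_contra! hdvd
      have := leeWeight_eq_zero_of_forall_dvd hdvd
      omega
    · omega
end
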